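/- Let q = p^e be a power of a prime with q ≡ 1 (mod 6), set t = (q-1)/6, and let a, b be integer multiples of t. Then for every λ ∈ 𝔽_q with λ ≠ 0 and λ⁶ ≠ 1, one has Σ_{j=0}^{q-2} g(ω^{j+a})·g(ω^{-j+b})·ω^j(-1)·ω^{6j}(λ) = (q-1)·g(ω^{a+b})·ω^b(-1)·ω^{-(a+b)}(1-λ⁶). -/

import Mathlib

open scoped Classical

noncomputable section

/-- The Gauss sum `g(χ) = ∑ₓ χ(x) exp(2π√-1 · tr(x)/p)` of a multiplicative character `χ`
of a finite field `F` of characteristic `p`, where `tr : F → 𝔽_p` is the trace map. -/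
def gaussChar (p : ℕ) (F : Type) [Field F] [Fintype F] [Algebra (ZMod p) F]
    (χ : MulChar F ℂ) : ℂ :=
  ∑ x : F, χ x *
    Complex.exp (2 * Real.pi * Complex.I * ((Algebra.trace (ZMod p) F x).val : ℂ) / (p : ℂ))

/-- The Jacobi sum `J(χ₁, …, χₙ) = ∑_{x₁ + ⋯ + xₙ = 1} χ₁(x₁) ⋯ χₙ(xₙ)`. -/
def jacobiS (F : Type) [Field F] [Fintype F] {n : ℕ} (χ : Fin n → MulChar F ℂ) : ℂ :=
  ∑ v ∈ Finset.univ.filter (fun v : Fin n → F => ∑ i, v i = 1), ∏ i, χ i (v i)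

/-- The normalized Jacobi sum `binom(A; B) = (B(-1)/q) · J(A, B̄)`. -/
def gBinom (F : Type) [Field F] [Fintype F] (A B : MulChar F ℂ) : ℂ :=
  B (-1) / (Fintype.card F : ℂ) * jacobiS F ![A, B⁻¹]

/-- Greene's finite-field hypergeometric function `ₙ₊₁Fₙ` (case `n ≥ 2`), where the sum over all
multiplicative characters is written as a sum over the powers `ω^j`, `0 ≤ j ≤ q - 2`, of a fixed
generator `ω` of the character group. -/
def greeneF (F : Type) [Field F] [Fintype F] (ω : MulChar F ℂ) {n : ℕ}
    (A : Fin (n + 1) → MulChar F ℂ) (B : Fin n → MulChar F ℂ) (x : F) : ℂ :=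
  (Fintype.card F : ℂ) / ((Fintype.card F : ℂ) - 1) *
    ∑ j ∈ Finset.range (Fintype.card F - 1),
      gBinom F (A 0 * ω ^ j) (ω ^ j) *
        (∏ i : Fin n, gBinom F (A i.succ * ω ^ j) (B i * ω ^ j)) * (ω ^ j) x

/-- Greene's finite-field hypergeometric function `₂F₁` (case `n = 1`):
`₂F₁(A₀, A₁; B₁ | x) = ε(x) · (A₁B₁(-1)/q) · ∑_y A₁(y) (A̅₁B₁)(1-y) A̅₀(1-xy)`. -/
def greene2F1 (F : Type) [Field F] [Fintype F] (A₀ A₁ B₁ : MulChar F ℂ) (x : F) : ℂ :=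
  (1 : MulChar F ℂ) x * ((A₁ * B₁) (-1) / (Fintype.card F : ℂ)) *
    ∑ y : F, A₁ y * (A₁⁻¹ * B₁) (1 - y) * A₀⁻¹ (1 - x * y)

/-- The number of `F`-rational points of the Dwork hypersurface
`x₁^d + ⋯ + x_d^d = dλ x₁ ⋯ x_d` in projective space. -/
def dworkCount (F : Type) [Field F] [Fintype F] (d : ℕ) (lam : F) : ℕ :=
  Nat.card {P : Projectivization F (Fin d → F) //
    ∑ i, P.rep i ^ d = (d : F) * lam * ∏ i, P.rep i}

/-- The number of `F`-rational points of the diagonal hypersurface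
`x₁^d + ⋯ + xₙ^d = dλ x₁^{h₁} ⋯ xₙ^{hₙ}` in projective space. -/
def diagCount (F : Type) [Field F] [Fintype F] (d n : ℕ) (h : Fin n → ℕ) (lam : F) : ℕ :=
  Nat.card {P : Projectivization F (Fin n → F) //
    ∑ i, P.rep i ^ d = (d : F) * lam * ∏ i, P.rep i ^ h i}

/-- The quantity `N_q(0, w)` from Koblitz's formula, with `t = (q - 1)/d`. -/
def NqW (p : ℕ) (F : Type) [Field F] [Fintype F] [Algebra (ZMod p) F]
    (ω : MulChar F ℂ) (d : ℕ) {n : ℕ} (w : Fin n → ZMod d) : ℂ :=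
  if ∀ i, w i = 0 then ((Fintype.card F : ℂ) ^ (n - 1) - 1) / ((Fintype.card F : ℂ) - 1)
  else if ∀ i, w i ≠ 0 then
    (1 / (Fintype.card F : ℂ)) *
      ∏ i, gaussChar p F (ω ^ ((w i).val * ((Fintype.card F - 1) / d)))
  else 0

/-- The quantity `S_{[w]} = (q-1)⁻¹ ∑_{j=0}^{q-2} (∏ᵢ g(ω^{wᵢt + hᵢj}) / g(ω^{dj})) ω^{dj}(dλ)`
from Koblitz's formula, with `t = (q - 1)/d`. -/
def SW (p : ℕ) (F : Type) [Field F] [Fintype F] [Algebra (ZMod p) F]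
    (ω : MulChar F ℂ) (d : ℕ) {n : ℕ} (h : Fin n → ℕ) (w : Fin n → ZMod d) (lam : F) : ℂ :=
  ((Fintype.card F : ℂ) - 1)⁻¹ *
    ∑ j ∈ Finset.range (Fintype.card F - 1),
      (∏ i, gaussChar p F (ω ^ ((w i).val * ((Fintype.card F - 1) / d) + h i * j))) /
          gaussChar p F (ω ^ (d * j)) * (ω ^ (d * j)) ((d : F) * lam)

end

/-! Expanding both Gauss sums turns the sum over `j` into the character sum
`∑ⱼ ωʲ(x c / y)` with `c = -λ⁶`, and orthogonality for the generator `ω` forces `y = c x`.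
What survives is `(q - 1) ω^b(c) ∑ₓ ω^{a+b}(x) ψ((1 + c) x)`, the Gauss sum of `ω^{a+b}` against
the additive character scaled by `1 - λ⁶`. Finally `ω^b(λ⁶) = 1` because `6b` is a multiple
of `q - 1`. -/

open Finset

noncomputable def traceAddChar (p : ℕ) [NeZero p] (F : Type) [Field F] [Fintype F]
    [Algebra (ZMod p) F] : AddChar F ℂ :=
  ZMod.stdAddChar.compAddMonoidHom (Algebra.trace (ZMod p) F).toAddMonoidHom

lemma gaussChar_eq_gaussSum (p : ℕ) [NeZero p] (F : Type) [Field F] [Fintype F]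
    [Algebra (ZMod p) F] (χ : MulChar F ℂ) :
    gaussChar p F χ = gaussSum χ (traceAddChar p F) := by
  simp only [gaussChar, gaussSum, traceAddChar, AddChar.compAddMonoidHom_apply,
    ZMod.stdAddChar_apply, ZMod.toCircle_apply, LinearMap.toAddMonoidHom_coe]

lemma sum_ite_mul_inv_eq_one {F M : Type*} [Field F] [Fintype F] [AddCommMonoid M]
    (u : F) (f : F → M) (hf : f 0 = 0) :
    ∑ y, (if u * y⁻¹ = 1 then f y else 0) = f u := by
  classical
  calc ∑ y, (if u * y⁻¹ = 1 then f y else 0)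
      = ∑ y, if u = y then f y else 0 := sum_congr rfl fun y _ => by
        obtain rfl | hy := eq_or_ne y 0
        · simp [hf]
        · rw [mul_inv_eq_one₀ hy]
    _ = f u := by simp

section

variable {F : Type*} [Field F] [Fintype F] {ω : MulChar F ℂ}

theorem sum_range_pow_apply_of_generator (hω : ∀ χ : MulChar F ℂ, ∃ j : ℕ, χ = ω ^ j) (u : F) :
    ∑ j ∈ range (Fintype.card F - 1), (ω ^ j) u =
      if u = 1 then (Fintype.card F - 1 : ℂ) else 0 := by
  classical
  split_ifs with hu1
  · simp [hu1, Nat.cast_sub Fintype.card_pos]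
  obtain rfl | hu0 := eq_or_ne u 0
  · exact sum_eq_zero fun j _ => MulChar.map_zero _
  have hpow : ∀ j : ℕ, (ω ^ j) u = ω u ^ j := fun j =>
    MulChar.pow_apply_coe ω j (Units.mk0 u hu0)
  have hne : ω u ≠ 1 := by
    obtain ⟨χ, hχ⟩ := MulChar.exists_apply_ne_one_of_hasEnoughRootsOfUnity F ℂ hu1
    obtain ⟨j, rfl⟩ := hω χ
    exact fun h => hχ (by rw [hpow, h, one_pow])
  have hord : ω u ^ (Fintype.card F - 1) = 1 := by
    rw [← hpow, ← Fintype.card_units, ω.pow_card_eq_one, MulChar.one_apply hu0.isUnit]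
  simp_rw [hpow, geom_sum_eq hne, hord, sub_self, zero_div]

theorem sum_gaussSum_mul_gaussSum_inv_mul
    (hω : ∀ χ : MulChar F ℂ, ∃ j : ℕ, χ = ω ^ j) (ψ : AddChar F ℂ) (χ₁ χ₂ : MulChar F ℂ)
    {c : F} (hc : 1 + c ≠ 0) :
    ∑ j ∈ range (Fintype.card F - 1),
        gaussSum (ω ^ j * χ₁) ψ * gaussSum ((ω ^ j)⁻¹ * χ₂) ψ * (ω ^ j) c =
      (Fintype.card F - 1 : ℂ) * χ₂ c * (χ₁ * χ₂)⁻¹ (1 + c) * gaussSum (χ₁ * χ₂) ψ := by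
  set m := (Fintype.card F - 1 : ℂ)
  have expand : ∀ j : ℕ, gaussSum (ω ^ j * χ₁) ψ * gaussSum ((ω ^ j)⁻¹ * χ₂) ψ * (ω ^ j) c =
      ∑ x, ∑ y, (ω ^ j) (x * c * y⁻¹) * (χ₁ x * ψ x * (χ₂ y * ψ y)) := fun j => by
    rw [gaussSum, gaussSum, sum_mul_sum, sum_mul]
    simp only [sum_mul]
    refine sum_congr rfl fun x _ => sum_congr rfl fun y _ => ?_
    simp only [MulChar.mul_apply, MulChar.inv_apply', map_mul]
    ring
  calc _ = ∑ x, ∑ y, (∑ j ∈ range (Fintype.card F - 1), (ω ^ j) (x * c * y⁻¹)) *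
              (χ₁ x * ψ x * (χ₂ y * ψ y)) := by
        simp only [expand, sum_mul]
        rw [sum_comm]
        exact sum_congr rfl fun x _ => sum_comm
    _ = ∑ x, m * (χ₁ x * ψ x * (χ₂ (x * c) * ψ (x * c))) := by
        refine sum_congr rfl fun x _ => ?_
        simp only [sum_range_pow_apply_of_generator hω, ite_mul, zero_mul]
        exact sum_ite_mul_inv_eq_one (x * c) (fun y => m * (χ₁ x * ψ x * (χ₂ y * ψ y)))
          (by simp [MulChar.map_zero])
    _ = m * χ₂ c * ∑ x, (χ₁ * χ₂) x * ψ.mulShift (1 + c) x := by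
        rw [mul_sum]
        refine sum_congr rfl fun x _ => ?_
        rw [AddChar.mulShift_apply, MulChar.mul_apply, map_mul,
          show (1 + c) * x = x + x * c by ring, AddChar.map_add_eq_mul]
        ring
    _ = m * χ₂ c * (χ₁ * χ₂)⁻¹ (1 + c) * gaussSum (χ₁ * χ₂) ψ := by
        have hshift := gaussSum_mulShift_eq (χ₁ * χ₂) ψ (Units.mk0 _ hc)
        rw [Units.val_mk0] at hshift
        rw [← gaussSum, hshift]
        ring

end

lemma MulChar.zpow_apply_pow_eq_one {F R : Type*} [Field F] [Fintype F] [CommRing R]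
    (χ : MulChar F R) {d : ℕ} {b : ℤ} (hd : d ∣ Fintype.card F - 1)
    (hb : (((Fintype.card F - 1) / d : ℕ) : ℤ) ∣ b) {x : F} (hx : x ≠ 0) :
    (χ ^ b) (x ^ d) = 1 := by
  classical
  obtain ⟨k, rfl⟩ := hb
  have hexp : (χ ^ (((Fintype.card F - 1) / d : ℕ) * k : ℤ)) ^ d = 1 := by
    rw [← zpow_natCast, ← zpow_mul, mul_right_comm, ← Nat.cast_mul, Nat.div_mul_cancel hd,
      zpow_mul, zpow_natCast, ← Fintype.card_units, χ.pow_card_eq_one, one_zpow]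
  rw [map_pow, ← Units.val_mk0 hx, ← MulChar.pow_apply_coe, hexp, MulChar.one_apply_coe]

theorem gauss_sum_lambda_identity_general (p q t : ℕ) [Fact p.Prime] (F : Type) [Field F] [Fintype F]
    [Algebra (ZMod p) F]
    (hq : q = Fintype.card F) (hmod : q % 6 = 1)
    (ht : t = (q - 1) / 6)
    (ω : MulChar F ℂ) (hω : ∀ χ : MulChar F ℂ, ∃ j : ℕ, χ = ω ^ j)
    (a b : ℤ) (hb : (t : ℤ) ∣ b)
    (lam : F) (hlam : lam ≠ 0) (hlam6 : lam ^ 6 ≠ 1) :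
    ∑ j ∈ Finset.range (q - 1),
        gaussChar p F (ω ^ ((j : ℤ) + a)) * gaussChar p F (ω ^ (-(j : ℤ) + b)) *
          (ω ^ (j : ℤ)) (-1) * (ω ^ (6 * (j : ℤ))) lam =
      ((q : ℂ) - 1) * gaussChar p F (ω ^ (a + b)) * (ω ^ b) (-1) *
        (ω ^ (-(a + b))) (1 - lam ^ 6) := by
  subst hq ht
  have hterm : ∀ j : ℕ,
      gaussChar p F (ω ^ ((j : ℤ) + a)) * gaussChar p F (ω ^ (-(j : ℤ) + b)) *
          (ω ^ (j : ℤ)) (-1) * (ω ^ (6 * (j : ℤ))) lam =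
        gaussSum (ω ^ j * ω ^ a) (traceAddChar p F) *
          gaussSum ((ω ^ j)⁻¹ * ω ^ b) (traceAddChar p F) * (ω ^ j) (-lam ^ 6) := fun j => by
    have h6 : (ω ^ (6 * (j : ℤ))) lam = (ω ^ j) (lam ^ 6) := by
      rw [show 6 * (j : ℤ) = ((j * 6 : ℕ) : ℤ) by push_cast; ring, zpow_natCast, pow_mul,
        MulChar.pow_apply' _ (by norm_num), map_pow]
    rw [gaussChar_eq_gaussSum, gaussChar_eq_gaussSum, zpow_add, zpow_add, zpow_neg, h6,
      zpow_natCast, neg_eq_neg_one_mul (lam ^ 6), map_mul]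
    ring
  have hb_lam : (ω ^ b) (lam ^ 6) = 1 := ω.zpow_apply_pow_eq_one (by omega) hb hlam
  rw [sum_congr rfl fun j _ => hterm j,
    sum_gaussSum_mul_gaussSum_inv_mul hω _ _ _ (by rwa [← sub_eq_add_neg, sub_ne_zero, ne_comm]),
    ← sub_eq_add_neg, neg_eq_neg_one_mul (lam ^ 6), map_mul, hb_lam, ← zpow_add, ← zpow_neg,
    ← gaussChar_eq_gaussSum]
  ring

/-- Lemma 3.3: a Gauss-sum identity used in the proof of the main theorem. -/
theorem gauss_sum_lambda_identity (p e q t : ℕ) [Fact p.Prime] (F : Type) [Field F] [Fintype F]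
    [Algebra (ZMod p) F]
    (he : 0 < e) (hq : q = Fintype.card F) (hqe : q = p ^ e) (hmod : q % 6 = 1)
    (ht : t = (q - 1) / 6)
    (ω : MulChar F ℂ) (hω : ∀ χ : MulChar F ℂ, ∃ j : ℕ, χ = ω ^ j)
    (a b : ℤ) (ha : (t : ℤ) ∣ a) (hb : (t : ℤ) ∣ b)
    (lam : F) (hlam : lam ≠ 0) (hlam6 : lam ^ 6 ≠ 1) :
    ∑ j ∈ Finset.range (q - 1),
        gaussChar p F (ω ^ ((j : ℤ) + a)) * gaussChar p F (ω ^ (-(j : ℤ) + b)) *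
          (ω ^ (j : ℤ)) (-1) * (ω ^ (6 * (j : ℤ))) lam =
      ((q : ℂ) - 1) * gaussChar p F (ω ^ (a + b)) * (ω ^ b) (-1) *
        (ω ^ (-(a + b))) (1 - lam ^ 6) :=
  gauss_sum_lambda_identity_general p q t F hq hmod ht ω hω a b hb lam hlam hlam6
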